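/- arXiv:0806.4401 — 7 statements merged into one kernel-verified Lean document; each statement's English description precedes it below -/
import Mathlib

section
/- For a prime P ≥ 2 and any integer i with 2 ≤ i ≤ P+2, the quantity (1/P) · C(P+i-3, i-2) · C(2P, P-i+1) is a positive integer, where C denotes the binomial coefficient. -/
/-!
Write `k = P - i + 1`, so that `1 ≤ k < P`. The identity `k · C(2P, k) = 2P · C(2P - 1, k - 1)` shows
that the prime `P` divides `k · C(2P, k)`, and it cannot divide `k`; hence `P ∣ C(2P, k)`, and the
quotient is positive because `k ≤ 2P`.
-/

theorem Nat.Prime.dvd_choose_of_dvd {p n k : ℕ} (hp : p.Prime) (hpn : p ∣ n) (hk : k ≠ 0)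
    (hkp : k < p) : p ∣ n.choose k := by
  obtain _ | n := n
  · simp [Nat.choose_eq_zero_of_lt (Nat.pos_of_ne_zero hk)]
  obtain _ | k := k
  · exact absurd rfl hk
  have hcop : p.Coprime (k + 1) := (hp.coprime_iff_not_dvd).2 fun h => by
    have := Nat.le_of_dvd (Nat.succ_pos k) h
    omega
  refine hcop.dvd_of_dvd_mul_right ?_
  rw [← Nat.add_one_mul_choose_eq]
  exact Dvd.dvd.mul_right hpn _

theorem pure_diagram_entries_are_positive_integers_general (P i : ℕ) (hP : P.Prime)
    (h2 : 2 ≤ i) :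
    ∃ m : ℕ, 0 < m ∧
      Nat.choose (P + i - 3) (i - 2) * Nat.choose (2 * P) (P - i + 1) = P * m := by
  have hP2 := hP.two_le
  obtain ⟨m, hm⟩ : P ∣ Nat.choose (2 * P) (P - i + 1) :=
    hP.dvd_choose_of_dvd (dvd_mul_left P 2) (by omega) (by omega)
  have hm_pos : 0 < m := Nat.pos_of_mul_pos_left (hm ▸ Nat.choose_pos (by omega))
  exact ⟨Nat.choose (P + i - 3) (i - 2) * m, Nat.mul_pos (Nat.choose_pos (by omega)) hm_pos,
    by rw [hm]; ring⟩

/-- For a prime `P ≥ 2` and any integer `i` with `2 ≤ i ≤ P+2`, the quantity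
`(1/P) · C(P+i-3, i-2) · C(2P, P-i+1)` is a positive integer. -/
theorem pure_diagram_entries_are_positive_integers (P i : ℕ) (hP : P.Prime)
    (h2 : 2 ≤ i) (hi : i ≤ P + 2) :
    ∃ m : ℕ, 0 < m ∧
      Nat.choose (P + i - 3) (i - 2) * Nat.choose (2 * P) (P - i + 1) = P * m :=
  pure_diagram_entries_are_positive_integers_general P i hP h2
end

section
/- Let C ⊆ Q^n be a rational polyhedral cone that is simplicial, spanned by linearly independent rational vectors v_0, ..., v_s. Then the semigroup of lattice points C ∩ Z^n is finitely generated, and there exists a positive integer m such that every lattice point of C is an N-linear combination of the vectors (1/m)·v_0, ..., (1/m)·v_s. -/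
/-!
Let `F` be a linear left inverse of `c ↦ ∑ cᵢ vᵢ` and `m` a common denominator of the entries of
the matrix of `F`. Then `m • F` maps lattice points to lattice points, so every lattice point
`∑ cᵢ vᵢ` of the cone has `m cᵢ ∈ ℕ`. Hence the lattice points of the cone are the image of the
submonoid `M = {a ∈ ℕ^(s+1) | ∑ aᵢ (vᵢ / m) ∈ ℤⁿ}`. If `d` clears the denominators of the `vᵢ`,
then `M` contains every `md • eᵢ` and is stable under reducing coordinates modulo `md`, so it is
generated by the `md • eᵢ` and its finitely many points in the box `[0, md)^(s+1)`.
-/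

open Finset

def latticePoints (ι : Type*) : AddSubgroup (ι → ℚ) :=
  (AddMonoidHom.compLeft (Int.castAddHom ℚ) ι).range

theorem mem_latticePoints {ι : Type*} {x : ι → ℚ} :
    x ∈ latticePoints ι ↔ ∃ y : ι → ℤ, x = fun j => (y j : ℚ) := by
  simp [latticePoints, eq_comm, funext_iff]

theorem Rat.exists_nat_mul_eq_intCast {κ : Type*} [Finite κ] (q : κ → ℚ) :
    ∃ m : ℕ, 0 < m ∧ ∀ k, ∃ z : ℤ, (m : ℚ) * q k = z := by
  cases nonempty_fintype κ
  refine ⟨∏ k, (q k).den, prod_pos fun k _ => (q k).den_pos, fun k => ?_⟩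
  obtain ⟨t, ht⟩ := dvd_prod_of_mem (fun k => (q k).den) (mem_univ k)
  refine ⟨(q k).num * t, ?_⟩
  rw [ht]
  push_cast
  linear_combination (t : ℚ) * (q k).mul_den_eq_num

theorem exists_nat_smul_mem_latticePoints {κ ι : Type*} [Finite κ] [Finite ι]
    (w : κ → ι → ℚ) : ∃ m : ℕ, 0 < m ∧ ∀ k, (m : ℚ) • w k ∈ latticePoints ι := by
  obtain ⟨m, hm, hz⟩ := Rat.exists_nat_mul_eq_intCast fun p : κ × ι => w p.1 p.2
  choose z hz using hz
  exact ⟨m, hm, fun k => mem_latticePoints.2 ⟨fun i => z (k, i), funext fun i => hz (k, i)⟩⟩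

theorem LinearMap.exists_nat_smul_map_mem_latticePoints {ι κ : Type*} [Fintype ι] [Finite κ]
    (F : (ι → ℚ) →ₗ[ℚ] (κ → ℚ)) :
    ∃ m : ℕ, 0 < m ∧ ∀ x ∈ latticePoints ι, (m : ℚ) • F x ∈ latticePoints κ := by
  classical
  obtain ⟨m, hm, hmF⟩ := exists_nat_smul_mem_latticePoints fun j => F (Pi.single j 1)
  refine ⟨m, hm, fun x hx => ?_⟩
  obtain ⟨y, rfl⟩ := mem_latticePoints.1 hx
  have hy : (fun j => (y j : ℚ)) = ∑ j, y j • Pi.single j (1 : ℚ) := by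
    ext i
    simp [Pi.single_apply]
  rw [hy, map_sum, smul_sum]
  refine AddSubgroup.sum_mem _ fun j _ => ?_
  rw [map_zsmul, smul_comm]
  exact AddSubgroup.zsmul_mem _ (hmF j) _

theorem LinearIndependent.exists_linearMap_sum_smul {K V κ : Type*} [Field K] [AddCommGroup V]
    [Module K V] [Fintype κ] {v : κ → V} (hv : LinearIndependent K v) :
    ∃ F : V →ₗ[K] (κ → K), ∀ c, F (∑ i, c i • v i) = c := by
  obtain ⟨F, hF⟩ := LinearMap.exists_leftInverse_of_injective (Fintype.linearCombination K v)
    (LinearMap.ker_eq_bot.2 hv.fintypeLinearCombination_injective)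
  exact ⟨F, fun c => by rw [← Fintype.linearCombination_apply]; exact LinearMap.congr_fun hF c⟩

theorem LinearIndependent.exists_universal_denominator {ι κ : Type*} [Fintype ι] [Fintype κ]
    {v : κ → ι → ℚ} (hv : LinearIndependent ℚ v) :
    ∃ m : ℕ, 0 < m ∧ ∀ c : κ → ℚ, (∀ i, 0 ≤ c i) → ∑ i, c i • v i ∈ latticePoints ι →
      ∃ a : κ → ℕ, ∑ i, c i • v i = ∑ i, (a i : ℚ) • ((m : ℚ)⁻¹ • v i) := by
  obtain ⟨F, hF⟩ := hv.exists_linearMap_sum_smul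
  obtain ⟨m, hm, hmF⟩ := F.exists_nat_smul_map_mem_latticePoints
  refine ⟨m, hm, fun c hc hx => ?_⟩
  obtain ⟨z, hz⟩ := mem_latticePoints.1 (hmF _ hx)
  rw [hF] at hz
  have hmc : ∀ i, (m : ℚ) * c i = (z i).toNat := by
    intro i
    have hzi : (m : ℚ) * c i = z i := congr_fun hz i
    have hz0 : 0 ≤ z i := by exact_mod_cast hzi ▸ mul_nonneg (Nat.cast_nonneg m) (hc i)
    rw [hzi, ← Int.cast_natCast, Int.toNat_of_nonneg hz0]
  refine ⟨fun i => (z i).toNat, sum_congr rfl fun i _ => ?_⟩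
  rw [smul_smul, ← hmc i]
  field_simp

theorem AddSubmonoid.fg_comap_of_single_mem {κ G : Type*} [Fintype κ] [DecidableEq κ]
    [AddCommGroup G] (φ : (κ → ℕ) →+ G) (L : AddSubgroup G) {N : ℕ} (hN : 0 < N)
    (hφN : ∀ i, φ (Pi.single i N) ∈ L) : (L.toAddSubmonoid.comap φ).FG := by
  set M := L.toAddSubmonoid.comap φ
  have hdecomp : ∀ a : κ → ℕ, a = (fun i => a i % N) + ∑ i, (a i / N) • Pi.single i N := by
    intro a
    ext i
    simp [Pi.single_apply, Nat.mod_add_div']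
  have hmod : ∀ a ∈ M, (fun i => a i % N) ∈ M := by
    intro a ha
    have hφa : φ (fun i => a i % N) = φ a - ∑ i, (a i / N) • φ (Pi.single i N) := by
      have := congrArg φ (hdecomp a)
      rw [map_add, map_sum] at this
      simp only [map_nsmul] at this
      exact eq_sub_of_add_eq this.symm
    rw [AddSubmonoid.mem_comap, hφa]
    exact L.sub_mem ha (L.sum_mem fun i _ => L.nsmul_mem (hφN i) _)
  set box := {a ∈ (M : Set (κ → ℕ)) | ∀ i, a i < N}
  refine (AddSubmonoid.fg_iff _).2
    ⟨box ∪ Set.range fun i => Pi.single i N, le_antisymm ?_ fun a ha => ?_, ?_⟩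
  · refine AddSubmonoid.closure_le.2 (Set.union_subset (fun a ha => ha.1) ?_)
    rintro _ ⟨i, rfl⟩
    exact hφN i
  · rw [hdecomp a]
    refine add_mem (AddSubmonoid.subset_closure (Or.inl ⟨hmod a ha, fun i => Nat.mod_lt _ hN⟩)) ?_
    refine AddSubmonoid.sum_mem _ fun i _ => AddSubmonoid.nsmul_mem _ ?_ _
    exact AddSubmonoid.subset_closure (Or.inr ⟨i, rfl⟩)
  · refine Set.Finite.union ?_ (Set.finite_range _)
    exact (Set.Finite.pi' fun _ => Set.finite_Iio N).subset fun a ha i => ha.2 i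

/-- Gordan's lemma with universal denominator for a simplicial rational cone: if
`C ⊆ ℚⁿ` is the cone of nonnegative rational combinations of linearly independent
vectors `v₀, …, v_s`, then the semigroup of lattice points of `C` is finitely
generated, and there is a positive integer `m` such that every lattice point of `C`
is an `ℕ`-combination of the vectors `(1/m)·vᵢ`. -/
theorem simplicial_cone_lattice_points_fg (n s : ℕ) (v : Fin (s + 1) → (Fin n → ℚ))
    (hv : LinearIndependent ℚ v) :
    (AddSubmonoid.closure {x : Fin n → ℚ |
        (∃ c : Fin (s + 1) → ℚ, (∀ i, 0 ≤ c i) ∧ x = ∑ i, c i • v i) ∧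
        (∃ y : Fin n → ℤ, x = fun j => (y j : ℚ))}).FG ∧
    ∃ m : ℕ, 0 < m ∧ ∀ x : Fin n → ℚ,
      ((∃ c : Fin (s + 1) → ℚ, (∀ i, 0 ≤ c i) ∧ x = ∑ i, c i • v i) ∧
        (∃ y : Fin n → ℤ, x = fun j => (y j : ℚ))) →
      ∃ a : Fin (s + 1) → ℕ, x = ∑ i, (a i : ℚ) • ((m : ℚ)⁻¹ • v i) := by
  classical
  obtain ⟨m, hm, hrep⟩ := hv.exists_universal_denominator
  obtain ⟨d, hd, hdv⟩ := exists_nat_smul_mem_latticePoints v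
  let φ : (Fin (s + 1) → ℕ) →+ (Fin n → ℚ) :=
    (Fintype.linearCombination ℕ fun i => (m : ℚ)⁻¹ • v i).toAddMonoidHom
  have hφ (a) : φ a = ∑ i, (a i : ℚ) • ((m : ℚ)⁻¹ • v i) := by
    simp [φ, Fintype.linearCombination_apply, Nat.cast_smul_eq_nsmul]
  set S := {x : Fin n → ℚ | (∃ c : Fin (s + 1) → ℚ, (∀ i, 0 ≤ c i) ∧ x = ∑ i, c i • v i) ∧
    (∃ y : Fin n → ℤ, x = fun j => (y j : ℚ))}
  have hS : S = ((latticePoints (Fin n)).toAddSubmonoid.comap φ).map φ := by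
    ext x
    simp only [S, Set.mem_ofPred_eq, ← mem_latticePoints, AddSubmonoid.coe_map, Set.mem_image,
      SetLike.mem_coe, AddSubmonoid.mem_comap, AddSubgroup.mem_toAddSubmonoid]
    constructor
    · rintro ⟨⟨c, hc, rfl⟩, hx⟩
      obtain ⟨a, ha⟩ := hrep c hc hx
      exact ⟨a, by rwa [hφ, ← ha], by rw [hφ, ha]⟩
    · rintro ⟨a, ha, rfl⟩
      exact ⟨⟨fun i => a i * (m : ℚ)⁻¹, fun i => by positivity, by simp [hφ, smul_smul]⟩, ha⟩
  have hsingle (i) : φ (Pi.single i (m * d)) ∈ latticePoints (Fin n) := by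
    convert hdv i using 1
    simp [hφ, Pi.single_apply, smul_smul, mul_right_comm _ (d : ℚ), hm.ne']
  refine ⟨?_, m, hm, ?_⟩
  · rw [hS, AddSubmonoid.closure_eq]
    exact (AddSubmonoid.fg_comap_of_single_mem φ _ (by positivity) hsingle).map φ
  · rintro x ⟨⟨c, hc, rfl⟩, hx⟩
    exact hrep c hc (mem_latticePoints.2 hx)
end

section
/- Let S = k[x₁,...,xₙ] be a polynomial ring over a field, and let A be an a×b matrix of linear forms representing the minimal presentation of a module M of codimension ≥ 2, with column degrees j₁ ≤ ... ≤ j_b. If I' ⊆ {1,...,b} has |I'| = a+1 and all a×a minors of the submatrix A_{I'} on columns I' vanish, then there is a subset I'' ⊆ I' and a nonzero syzygy τ on the columns of A indexed by I'' of degree ∑_{i∈I''} j_i, which is strictly less than ∑_{i∈I'} j_i. -/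
/-!
Take a nonzero `s × s` minor of `A` with columns in `I'` and `s` maximal. As all `a × a`
minors on `I'` vanish, `s < a`, so the minor extends by a column `ℓ₀ ∈ I'` to `s + 1`
columns `I''`. The signed maximal minors of the chosen `s` rows on `I''` form a
Buchsbaum–Rim syzygy: pairing it with a row of `A` is the Laplace expansion of an
`(s + 1) × (s + 1)` minor, which vanishes by the maximality of `s` or because two of its rows
agree. Its entry at `ℓ₀` is the chosen minor, so it is nonzero, and each entry, a minor of
forms, has the degree `∑_{I''} j - j ℓ`. Finally `I''` misses a column of `I'`, and every
column has positive degree.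
-/

open Finset

theorem Nat.exists_lt_and_not_succ {P : ℕ → Prop} {a : ℕ} (h0 : P 0) (ha : ¬ P a) :
    ∃ s < a, P s ∧ ¬ P (s + 1) := by
  induction a with
  | zero => exact absurd h0 ha
  | succ a ih =>
    by_cases h : P a
    · exact ⟨a, a.lt_succ_self, h, ha⟩
    · obtain ⟨s, hs, hPs⟩ := ih h
      exact ⟨s, by omega, hPs⟩

theorem Finset.exists_cons_embedding {ι : Type*} {I : Finset ι} {s : ℕ} (g : Fin s ↪ ι)
    (hg : ∀ i, g i ∈ I) (hs : s < #I) :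
    ∃ g' : Fin (s + 1) ↪ ι, (∀ p, g' p ∈ I) ∧ ∀ i, g' i.succ = g i := by
  obtain ⟨ℓ₀, hℓ₀I, hℓ₀g⟩ :=
    exists_mem_notMem_of_card_lt_card (s := univ.map g) (by simpa)
  have hℓ₀ : ℓ₀ ∉ Set.range g := by simpa using hℓ₀g
  refine ⟨⟨Fin.cons ℓ₀ g, Fin.cons_injective_iff.2 ⟨hℓ₀, g.injective⟩⟩, fun p => ?_,
    fun _ => rfl⟩
  cases p using Fin.cases
  exacts [hℓ₀I, hg _]

namespace Matrix

variable {R : Type*} [CommRing R]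

theorem isHomogeneous_det {σ m : Type*} [Fintype m] [DecidableEq m]
    {M : Matrix m m (MvPolynomial σ R)} {w : m → ℕ}
    (h : ∀ i l, (M i l).IsHomogeneous (w l)) :
    M.det.IsHomogeneous (∑ l, w l) := by
  rw [det_apply]
  refine MvPolynomial.IsHomogeneous.sum _ _ _ fun τ _ => ?_
  rw [← MvPolynomial.mem_homogeneousSubmodule, Units.smul_def]
  exact zsmul_mem ((MvPolynomial.mem_homogeneousSubmodule _ _).2
    (MvPolynomial.IsHomogeneous.prod _ _ _ fun i _ => h (τ i) i)) _

section BuchsbaumRim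

variable {s : ℕ}

def buchsbaumRimSyzygy (B : Matrix (Fin s) (Fin (s + 1)) R) : Fin (s + 1) → R :=
  fun p => (-1) ^ (p : ℕ) * (B.submatrix id p.succAbove).det

theorem buchsbaumRimSyzygy_zero (B : Matrix (Fin s) (Fin (s + 1)) R) :
    B.buchsbaumRimSyzygy 0 = (B.submatrix id Fin.succ).det := by
  simp [buchsbaumRimSyzygy, Fin.succAbove_zero]

theorem dotProduct_buchsbaumRimSyzygy (v : Fin (s + 1) → R) (B : Matrix (Fin s) (Fin (s + 1)) R) :
    v ⬝ᵥ B.buchsbaumRimSyzygy = (of (Fin.cons v B)).det := by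
  rw [det_succ_row_zero]
  refine sum_congr rfl fun p _ => ?_
  rw [buchsbaumRimSyzygy, mul_left_comm, mul_assoc]
  rfl

theorem mulVec_buchsbaumRimSyzygy {m : Type*} (C : Matrix m (Fin (s + 1)) R) (r : Fin s → m)
    (h : ∀ q, (C.submatrix (Fin.cons q r) id).det = 0) :
    C *ᵥ (C.submatrix r id).buchsbaumRimSyzygy = 0 := by
  funext q
  rw [Pi.zero_apply, ← h q, mulVec, dotProduct_buchsbaumRimSyzygy]
  congr 1
  ext i p
  cases i using Fin.cases <;> rfl

theorem isHomogeneous_buchsbaumRimSyzygy {σ : Type*}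
    {B : Matrix (Fin s) (Fin (s + 1)) (MvPolynomial σ R)} {w : Fin (s + 1) → ℕ}
    (h : ∀ i l, (B i l).IsHomogeneous (w l)) (p : Fin (s + 1)) :
    (B.buchsbaumRimSyzygy p).IsHomogeneous ((∑ l, w l) - w p) := by
  rw [Fin.sum_univ_succAbove w p, Nat.add_sub_cancel_left]
  have hdet : (B.submatrix id p.succAbove).det.IsHomogeneous (∑ l, w (p.succAbove l)) :=
    isHomogeneous_det fun i l => h i (p.succAbove l)
  simpa only [buchsbaumRimSyzygy, zero_mul, zero_add] using
    ((MvPolynomial.isHomogeneous_one σ R).neg.pow p).mul hdet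

end BuchsbaumRim

section Minors

variable {m ι : Type*}

def HasNonzeroMinorOn (A : Matrix m ι R) (I : Set ι) (s : ℕ) : Prop :=
  ∃ (r : Fin s ↪ m) (g : Fin s ↪ ι), (∀ i, g i ∈ I) ∧ (A.submatrix r g).det ≠ 0

theorem hasNonzeroMinorOn_zero [Nontrivial R] (A : Matrix m ι R) (I : Set ι) :
    A.HasNonzeroMinorOn I 0 :=
  ⟨Function.Embedding.ofIsEmpty, Function.Embedding.ofIsEmpty, fun i => i.elim0, by simp⟩

theorem not_hasNonzeroMinorOn_of_det_eq_zero {a : ℕ} {A : Matrix (Fin a) ι R} {I : Set ι}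
    (h : ∀ g : Fin a ↪ ι, (∀ i, g i ∈ I) → (A.submatrix id g).det = 0) :
    ¬ A.HasNonzeroMinorOn I a := by
  rintro ⟨r, g, hg, hdet⟩
  let e : Equiv.Perm (Fin a) := Equiv.ofBijective r (Finite.injective_iff_bijective.1 r.injective)
  have hperm := det_permute e (A.submatrix id g)
  rw [h g hg, mul_zero] at hperm
  exact hdet hperm

theorem det_submatrix_cons_eq_zero [DecidableEq m] {A : Matrix m ι R} {I : Set ι} {s : ℕ}
    (hmax : ¬ A.HasNonzeroMinorOn I (s + 1)) (r : Fin s ↪ m) {g : Fin (s + 1) ↪ ι}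
    (hg : ∀ p, g p ∈ I) (q : m) : (A.submatrix (Fin.cons q r) g).det = 0 := by
  by_cases hq : q ∈ Set.range r
  · obtain ⟨i, rfl⟩ := hq
    exact det_zero_of_row_eq (i := 0) (j := i.succ) (Fin.succ_ne_zero i).symm rfl
  · by_contra hdet
    exact hmax ⟨⟨Fin.cons q r, Fin.cons_injective_iff.2 ⟨hq, r.injective⟩⟩, g, hg, hdet⟩

theorem exists_buchsbaumRimSyzygy_ne_zero [Nontrivial R] {a : ℕ} (A : Matrix (Fin a) ι R)
    {I : Finset ι} (hI : a < #I)
    (h : ∀ g : Fin a ↪ ι, (∀ i, g i ∈ I) → (A.submatrix id g).det = 0) :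
    ∃ s < a, ∃ (r : Fin s ↪ Fin a) (g : Fin (s + 1) ↪ ι), (∀ p, g p ∈ I) ∧
      (A.submatrix r g).buchsbaumRimSyzygy 0 ≠ 0 ∧
      A.submatrix id g *ᵥ (A.submatrix r g).buchsbaumRimSyzygy = 0 := by
  obtain ⟨s, hs, ⟨r, g, hgI, hdet⟩, hmax⟩ := Nat.exists_lt_and_not_succ
    (hasNonzeroMinorOn_zero A I) (not_hasNonzeroMinorOn_of_det_eq_zero h)
  obtain ⟨g', hg'I, hg'⟩ := exists_cons_embedding g hgI (by omega)
  refine ⟨s, hs, r, g', hg'I, ?_, mulVec_buchsbaumRimSyzygy _ r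
    (det_submatrix_cons_eq_zero hmax r hg'I)⟩
  rw [buchsbaumRimSyzygy_zero, submatrix_submatrix, show ⇑g' ∘ Fin.succ = g from funext hg']
  exact hdet

end Minors

end Matrix

theorem buchsbaum_rim_lower_degree_syzygy_general (k : Type*) [Field k] (n a b : ℕ)
    (A : Matrix (Fin a) (Fin b) (MvPolynomial (Fin n) k))
    (j : Fin b → ℕ) (hj1 : ∀ ℓ, 1 ≤ j ℓ)
    (hhom : ∀ i ℓ, (A i ℓ).IsHomogeneous (j ℓ))
    (I' : Finset (Fin b)) (hI' : I'.card = a + 1)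
    (hminors : ∀ g : Fin a ↪ Fin b, (∀ i, g i ∈ I') → (A.submatrix id g).det = 0) :
    ∃ I'' : Finset (Fin b), I'' ⊆ I' ∧
      ∃ τ : Fin b → MvPolynomial (Fin n) k, τ ≠ 0 ∧
        (∀ ℓ, ℓ ∉ I'' → τ ℓ = 0) ∧
        (∀ ℓ ∈ I'', (τ ℓ).IsHomogeneous ((∑ i ∈ I'', j i) - j ℓ)) ∧
        (∀ r : Fin a, ∑ ℓ ∈ I'', A r ℓ * τ ℓ = 0) ∧
        (∑ i ∈ I'', j i) < ∑ i ∈ I', j i := by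
  obtain ⟨s, hs, r, g, hgI, hρ0, hsyz⟩ :=
    A.exists_buchsbaumRimSyzygy_ne_zero (hI' ▸ a.lt_succ_self) hminors
  set ρ := (A.submatrix r g).buchsbaumRimSyzygy
  have hτ : ∀ p, Function.extend g ρ 0 (g p) = ρ p := g.injective.extend_apply ρ 0
  have hsub : univ.map g ⊆ I' := by simpa [subset_iff] using hgI
  refine ⟨univ.map g, hsub, Function.extend g ρ 0, Function.ne_iff.2 ⟨g 0, by rwa [hτ]⟩,
    fun ℓ hℓ => Function.extend_apply' _ _ _ (by simpa using hℓ), ?_, ?_, ?_⟩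
  · simp only [mem_map, sum_map]
    rintro _ ⟨p, -, rfl⟩
    rw [hτ]
    exact Matrix.isHomogeneous_buchsbaumRimSyzygy (fun i l => hhom (r i) (g l)) p
  · intro q
    simpa [sum_map, hτ, Matrix.mulVec, dotProduct] using congrFun hsyz q
  · obtain ⟨ℓ, hℓI, hℓ⟩ := exists_mem_notMem_of_card_lt_card (s := univ.map g) (t := I')
      (by simpa [hI'] using hs)
    exact sum_lt_sum_of_subset hsub hℓI hℓ (hj1 ℓ) fun _ _ _ => Nat.zero_le _

/-- Buchsbaum–Rim second syzygies in lower degree (Lemma `lem:brcol1`): let `A` be the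
`a × b` minimal presentation matrix of a graded module, with homogeneous entries, the
`ℓ`-th column consisting of forms of degree `j ℓ ≥ 1`, and `j` sorted increasingly.
If `I'` is a set of `a+1` columns on which all `a × a` minors of `A` vanish, then there
is a subset `I'' ⊆ I'` and a nonzero homogeneous syzygy `τ` supported on the columns
`I''`, of degree `∑_{i ∈ I''} j i`, which is strictly less than `∑_{i ∈ I'} j i`. -/
theorem buchsbaum_rim_lower_degree_syzygy (k : Type*) [Field k] (n a b : ℕ)
    (A : Matrix (Fin a) (Fin b) (MvPolynomial (Fin n) k))
    (j : Fin b → ℕ) (hj : Monotone j) (hj1 : ∀ ℓ, 1 ≤ j ℓ)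
    (hhom : ∀ i ℓ, (A i ℓ).IsHomogeneous (j ℓ))
    (I' : Finset (Fin b)) (hI' : I'.card = a + 1)
    (hminors : ∀ g : Fin a ↪ Fin b, (∀ i, g i ∈ I') → (A.submatrix id g).det = 0) :
    ∃ I'' : Finset (Fin b), I'' ⊆ I' ∧
      ∃ τ : Fin b → MvPolynomial (Fin n) k, τ ≠ 0 ∧
        (∀ ℓ, ℓ ∉ I'' → τ ℓ = 0) ∧
        (∀ ℓ ∈ I'', (τ ℓ).IsHomogeneous ((∑ i ∈ I'', j i) - j ℓ)) ∧
        (∀ r : Fin a, ∑ ℓ ∈ I'', A r ℓ * τ ℓ = 0) ∧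
        (∑ i ∈ I'', j i) < ∑ i ∈ I', j i :=
  buchsbaum_rim_lower_degree_syzygy_general k n a b A j hj1 hhom I' hI' hminors
end

section
/- A diagram D of projective dimension 1 (with sorted generator degrees α₁ ≤ ... ≤ α_s and sorted syzygy degrees γ₁ ≤ ... ≤ γ_s) is the Betti diagram of a k[x]-module if and only if α_i + 1 ≤ γ_i for all i. In particular, B_N = B_mod in projective dimension 1, and B_mod is generated by pure diagrams. -/
/-!
If `αᵢ ≥ γᵢ` for some `i`, monotonicity makes every entry `φ a b` with `b ≤ i ≤ a`
vanish, since `γ_b - α_a ≤ γᵢ - αᵢ ≤ 0`. This zero block has `s - i` rows and `i + 1`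
columns, so by pigeonhole every permutation passes through it and `det φ = 0`.
Conversely, if `αᵢ < γᵢ` for all `i`, the diagonal matrix with entries `x^(γᵢ - αᵢ)`
presents `⊕ S(-αᵢ) / x^(γᵢ - αᵢ)`, a sum of pure diagrams.
-/

open Polynomial

theorem Equiv.Perm.exists_le_le_apply {n : ℕ} (σ : Equiv.Perm (Fin n)) (i : Fin n) :
    ∃ j ≤ i, i ≤ σ j := by
  by_contra! h
  have hmaps : (Finset.Iic i).image σ ⊆ Finset.Iio i := by
    simp only [Finset.image_subset_iff, Finset.mem_Iic, Finset.mem_Iio]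
    exact h
  have hcard := Finset.card_le_card hmaps
  rw [Finset.card_image_of_injective _ σ.injective, Fin.card_Iic, Fin.card_Iio] at hcard
  omega

theorem Matrix.det_eq_zero_of_lowerLeft_eq_zero {R : Type*} [CommRing R] {n : ℕ}
    (M : Matrix (Fin n) (Fin n) R) (i : Fin n) (hM : ∀ a b, b ≤ i → i ≤ a → M a b = 0) :
    M.det = 0 := by
  rw [Matrix.det_apply]
  refine Finset.sum_eq_zero fun σ _ => ?_
  obtain ⟨j, hji, hiσj⟩ := σ.exists_le_le_apply i
  have hprod : ∏ l, M (σ l) l = 0 :=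
    Finset.prod_eq_zero (Finset.mem_univ j) (hM (σ j) j hji hiσj)
  rw [hprod, smul_zero]

/-- `φ` as a degree-0 map `⊕ S(-γⱼ) → ⊕ S(-αᵢ)` over `S = R[x]`: entry `(i, j)` is homogeneous
of degree `γⱼ - αᵢ`, and minimality forces it to vanish when that degree is `≤ 0`. -/
def IsMinimalPresentation {R ι : Type*} [CommRing R] (α γ : ι → ℤ)
    (φ : Matrix ι ι R[X]) : Prop :=
  ∀ i j, (∃ c : R, φ i j = c • X ^ (γ j - α i).toNat) ∧ (γ j - α i ≤ 0 → φ i j = 0)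

theorem IsMinimalPresentation.lt_of_det_ne_zero {R : Type*} [CommRing R] {n : ℕ}
    {α γ : Fin n → ℤ} (hα : Monotone α) (hγ : Monotone γ) {φ : Matrix (Fin n) (Fin n) R[X]}
    (hφ : IsMinimalPresentation α γ φ) (hdet : φ.det ≠ 0) (i : Fin n) :
    α i < γ i := by
  by_contra! hi
  refine hdet (φ.det_eq_zero_of_lowerLeft_eq_zero i fun a b hbi hia => (hφ a b).2 ?_)
  linarith [hγ hbi, hα hia]

theorem isMinimalPresentation_diagonal {R ι : Type*} [CommRing R] [DecidableEq ι]
    {α γ : ι → ℤ} (h : ∀ i, α i < γ i) :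
    IsMinimalPresentation α γ (Matrix.diagonal fun i => (X : R[X]) ^ (γ i - α i).toNat) := by
  intro i j
  rcases eq_or_ne i j with rfl | hij
  · exact ⟨⟨1, by simp⟩, fun hle => absurd (h i) (by omega)⟩
  · exact ⟨⟨0, by simp [Matrix.diagonal_apply_ne _ hij]⟩,
      fun _ => Matrix.diagonal_apply_ne _ hij⟩

/-- Over `k[x]`, a projective dimension 1 diagram with sorted generator degrees
`α₁ ≤ … ≤ α_s` and sorted syzygy degrees `γ₁ ≤ … ≤ γ_s` is the Betti diagram of a
module if and only if `αᵢ + 1 ≤ γᵢ` for all `i`.  Being a Betti diagram is expressed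
by the existence of a minimal graded injective presentation matrix
`φ : ⊕ S(-γⱼ) → ⊕ S(-αᵢ)`: a square matrix whose `(i,j)` entry is a scalar multiple of
`x^(γⱼ - αᵢ)` (and zero when `γⱼ - αᵢ ≤ 0`, which encodes minimality), with `det φ ≠ 0`. -/
theorem pd_one_betti_diagram_iff (k : Type*) [Field k] (s : ℕ) (α γ : Fin s → ℤ)
    (hα : Monotone α) (hγ : Monotone γ) :
    (∃ φ : Matrix (Fin s) (Fin s) (Polynomial k),
      φ.det ≠ 0 ∧
      ∀ i j, (∃ c : k, φ i j = c • Polynomial.X ^ (γ j - α i).toNat) ∧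
        (γ j - α i ≤ 0 → φ i j = 0)) ↔
    ∀ i, α i + 1 ≤ γ i := by
  constructor
  · rintro ⟨φ, hdet, hφ⟩ i
    exact IsMinimalPresentation.lt_of_det_ne_zero hα hγ hφ hdet i
  · intro h
    refine ⟨_, ?_, isMinimalPresentation_diagonal (R := k) h⟩
    rw [Matrix.det_diagonal]
    exact Finset.prod_ne_zero_iff.2 fun i _ => pow_ne_zero _ X_ne_zero
end

section
/- Over k[x,y], a set of linear syzygies on a 6×12 matrix of linear forms has dimension at most 6. More precisely: if T₁ is a 6×12 matrix of linear forms in k[x,y] and T₂ is a 12×m matrix of linear forms in k[x,y] with T₁·T₂ = 0 and the columns of T₂ k-linearly independent, then m ≤ 6. -/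
/-!
Write `T₁ = A x + B y` and `T₂ = a x + b y` with scalar matrices `A, B, a, b`. Comparing the
coefficients of `x²`, `xy`, `y²` in `T₁ T₂ = 0` gives `A a = 0`, `A b + B a = 0`, `B b = 0`, and
`k`-independence of the columns of `T₁` (resp. `T₂`) says that `v ↦ (A v, B v)` (resp.
`c ↦ (a c, b c)`) is injective. Then `A b : k^m → k^6` is injective: if `A b c = 0`, then `b c` is
killed by `A` and `B`, so `b c = 0`; hence `B (a c) = -A b c = 0` and `A (a c) = 0`, so `a c = 0`
as well, and `c = 0`.
-/

open MvPolynomial Matrix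

namespace MvPolynomial.IsHomogeneous

variable {R σ : Type*} [CommSemiring R]

theorem eq_of_forall_coeff_single_one_eq {p q : MvPolynomial σ R} (hp : p.IsHomogeneous 1)
    (hq : q.IsHomogeneous 1)
    (h : ∀ i, coeff (Finsupp.single i 1) p = coeff (Finsupp.single i 1) q) : p = q := by
  ext d
  by_cases hd : d.degree = 1
  · obtain ⟨i, rfl⟩ : d ∈ Set.range (Finsupp.single · 1) := Finsupp.range_single_one ▸ hd
    exact h i
  · rw [hp.coeff_eq_zero hd, hq.coeff_eq_zero hd]

theorem eq_sum_C_mul_X [Fintype σ] {p : MvPolynomial σ R} (hp : p.IsHomogeneous 1) :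
    p = ∑ i, C (coeff (Finsupp.single i 1) p) * X i := by
  classical
  refine hp.eq_of_forall_coeff_single_one_eq
    (.sum _ _ _ fun i _ => isHomogeneous_C_mul_X _ i) fun i => ?_
  simp [coeff_sum, coeff_C_mul, coeff_X, Finsupp.single_left_inj]

variable {p q : MvPolynomial (Fin 2) R}

theorem eq_C_mul_X_zero_add_C_mul_X_one (hp : p.IsHomogeneous 1) :
    p = C (coeff (Finsupp.single 0 1) p) * X 0 + C (coeff (Finsupp.single 1 1) p) * X 1 := by
  simpa using hp.eq_sum_C_mul_X

theorem coeff_single_zero_two_mul (hp : p.IsHomogeneous 1) (hq : q.IsHomogeneous 1) :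
    coeff (Finsupp.single 0 2) (p * q) =
      coeff (Finsupp.single 0 1) p * coeff (Finsupp.single 0 1) q := by
  conv_lhs => rw [hp.eq_C_mul_X_zero_add_C_mul_X_one, hq.eq_C_mul_X_zero_add_C_mul_X_one]
  simp only [X, C_mul_monomial, monomial_mul, add_mul, mul_add, coeff_add, coeff_monomial]
  simp [Finsupp.ext_iff, Fin.forall_fin_two]

theorem coeff_single_one_two_mul (hp : p.IsHomogeneous 1) (hq : q.IsHomogeneous 1) :
    coeff (Finsupp.single 1 2) (p * q) =
      coeff (Finsupp.single 1 1) p * coeff (Finsupp.single 1 1) q := by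
  conv_lhs => rw [hp.eq_C_mul_X_zero_add_C_mul_X_one, hq.eq_C_mul_X_zero_add_C_mul_X_one]
  simp only [X, C_mul_monomial, monomial_mul, add_mul, mul_add, coeff_add, coeff_monomial]
  simp [Finsupp.ext_iff, Fin.forall_fin_two]

theorem coeff_single_zero_one_add_single_one_one_mul (hp : p.IsHomogeneous 1)
    (hq : q.IsHomogeneous 1) :
    coeff (Finsupp.single 0 1 + Finsupp.single 1 1) (p * q) =
      coeff (Finsupp.single 0 1) p * coeff (Finsupp.single 1 1) q +
        coeff (Finsupp.single 1 1) p * coeff (Finsupp.single 0 1) q := by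
  conv_lhs => rw [hp.eq_C_mul_X_zero_add_C_mul_X_one, hq.eq_C_mul_X_zero_add_C_mul_X_one]
  simp only [X, C_mul_monomial, monomial_mul, add_mul, mul_add, coeff_add, coeff_monomial]
  simp [Finsupp.ext_iff, Fin.forall_fin_two, add_comm]

end MvPolynomial.IsHomogeneous

namespace Matrix

section LinearForms

variable {R : Type*} [CommRing R] {ι κ μ : Type*} [Fintype κ]

theorem eq_zero_of_forall_map_coeff_mulVec_eq_zero {σ : Type*}
    {T : Matrix ι κ (MvPolynomial σ R)} (hT : ∀ i j, (T i j).IsHomogeneous 1)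
    (hcols : LinearIndependent R fun j i => T i j) {v : κ → R}
    (hv : ∀ s, T.map (coeff (Finsupp.single s 1)) *ᵥ v = 0) : v = 0 := by
  ext j
  refine Fintype.linearIndependent_iff.mp hcols v (_root_.funext fun i => ?_) j
  simp only [Finset.sum_apply, Pi.smul_apply, Pi.zero_apply, smul_eq_C_mul]
  refine (IsHomogeneous.sum _ _ _ fun j _ => (hT i j).C_mul _).eq_of_forall_coeff_single_one_eq
    (isHomogeneous_zero _ _ _) fun s => ?_
  simp only [coeff_sum, coeff_C_mul, coeff_zero]
  simpa [mulVec, dotProduct, mul_comm] using congrFun (hv s) i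

variable {P : Matrix ι κ (MvPolynomial (Fin 2) R)} {Q : Matrix κ μ (MvPolynomial (Fin 2) R)}

theorem map_coeff_single_zero_two_mul (hP : ∀ i l, (P i l).IsHomogeneous 1)
    (hQ : ∀ l j, (Q l j).IsHomogeneous 1) :
    (P * Q).map (coeff (Finsupp.single 0 2)) =
      P.map (coeff (Finsupp.single 0 1)) * Q.map (coeff (Finsupp.single 0 1)) := by
  ext i j
  simp only [map_apply, mul_apply, coeff_sum, (hP _ _).coeff_single_zero_two_mul (hQ _ _)]

theorem map_coeff_single_one_two_mul (hP : ∀ i l, (P i l).IsHomogeneous 1)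
    (hQ : ∀ l j, (Q l j).IsHomogeneous 1) :
    (P * Q).map (coeff (Finsupp.single 1 2)) =
      P.map (coeff (Finsupp.single 1 1)) * Q.map (coeff (Finsupp.single 1 1)) := by
  ext i j
  simp only [map_apply, mul_apply, coeff_sum, (hP _ _).coeff_single_one_two_mul (hQ _ _)]

theorem map_coeff_single_zero_one_add_single_one_one_mul (hP : ∀ i l, (P i l).IsHomogeneous 1)
    (hQ : ∀ l j, (Q l j).IsHomogeneous 1) :
    (P * Q).map (coeff (Finsupp.single 0 1 + Finsupp.single 1 1)) =
      P.map (coeff (Finsupp.single 0 1)) * Q.map (coeff (Finsupp.single 1 1)) +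
        P.map (coeff (Finsupp.single 1 1)) * Q.map (coeff (Finsupp.single 0 1)) := by
  ext i j
  simp only [map_apply, add_apply, mul_apply, coeff_sum, ← Finset.sum_add_distrib,
    (hP _ _).coeff_single_zero_one_add_single_one_one_mul (hQ _ _)]

end LinearForms

section Pencil

variable {K : Type*} [Field K] {ι κ μ : Type*} [Fintype ι] [Fintype κ] [Fintype μ]

theorem card_le_card_of_pencils_mul_eq_zero {A B : Matrix ι κ K} {a b : Matrix κ μ K}
    (hAa : A * a = 0) (hBb : B * b = 0) (hmix : A * b + B * a = 0)
    (hAB : ∀ v, A *ᵥ v = 0 → B *ᵥ v = 0 → v = 0)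
    (hab : ∀ c, a *ᵥ c = 0 → b *ᵥ c = 0 → c = 0) :
    Fintype.card μ ≤ Fintype.card ι := by
  have hinj : Function.Injective (A * b).mulVecLin := by
    rw [← LinearMap.ker_eq_bot, LinearMap.ker_eq_bot']
    intro c hc
    rw [mulVecLin_apply, ← mulVec_mulVec] at hc
    have hbc : b *ᵥ c = 0 := hAB _ hc (by rw [mulVec_mulVec, hBb, zero_mulVec])
    have hBa : B * a = -(A * b) := eq_neg_of_add_eq_zero_right hmix
    have hac : a *ᵥ c = 0 := hAB _ (by rw [mulVec_mulVec, hAa, zero_mulVec])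
      (by rw [mulVec_mulVec, hBa, neg_mulVec, ← mulVec_mulVec, hbc, mulVec_zero, neg_zero])
    exact hab c hac hbc
  simpa using LinearMap.finrank_le_finrank_of_injective hinj

theorem card_le_card_of_mul_eq_zero_of_isHomogeneous_one
    {T₁ : Matrix ι κ (MvPolynomial (Fin 2) K)} {T₂ : Matrix κ μ (MvPolynomial (Fin 2) K)}
    (h₁ : ∀ i l, (T₁ i l).IsHomogeneous 1) (h₂ : ∀ l j, (T₂ l j).IsHomogeneous 1)
    (hT₁ : LinearIndependent K fun l i => T₁ i l) (hT₂ : LinearIndependent K fun j l => T₂ l j)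
    (hmul : T₁ * T₂ = 0) :
    Fintype.card μ ≤ Fintype.card ι := by
  refine card_le_card_of_pencils_mul_eq_zero (A := T₁.map (coeff (Finsupp.single 0 1)))
    (B := T₁.map (coeff (Finsupp.single 1 1))) (a := T₂.map (coeff (Finsupp.single 0 1)))
    (b := T₂.map (coeff (Finsupp.single 1 1))) ?_ ?_ ?_ ?_ ?_
  · rw [← map_coeff_single_zero_two_mul h₁ h₂, hmul, Matrix.map_zero _ (coeff_zero _)]
  · rw [← map_coeff_single_one_two_mul h₁ h₂, hmul, Matrix.map_zero _ (coeff_zero _)]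
  · rw [← map_coeff_single_zero_one_add_single_one_one_mul h₁ h₂, hmul,
      Matrix.map_zero _ (coeff_zero _)]
  · exact fun v hA hB =>
      eq_zero_of_forall_map_coeff_mulVec_eq_zero h₁ hT₁ (Fin.forall_fin_two.2 ⟨hA, hB⟩)
  · exact fun c ha hb =>
      eq_zero_of_forall_map_coeff_mulVec_eq_zero h₂ hT₂ (Fin.forall_fin_two.2 ⟨ha, hb⟩)

end Pencil

end Matrix

/-- Over `k[x,y]`, a `6 × 12` matrix of linear forms with `k`-linearly independent columns
admits at most `6` `k`-linearly independent linear syzygies: if `T₁ · T₂ = 0` with `T₂` a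
`12 × m` matrix of linear forms whose columns are `k`-linearly independent, then `m ≤ 6`. -/
theorem linear_syzygies_bound (k : Type*) [Field k] (m : ℕ)
    (T₁ : Matrix (Fin 6) (Fin 12) (MvPolynomial (Fin 2) k))
    (T₂ : Matrix (Fin 12) (Fin m) (MvPolynomial (Fin 2) k))
    (h1 : ∀ i j, (T₁ i j).IsHomogeneous 1)
    (h2 : ∀ i j, (T₂ i j).IsHomogeneous 1)
    (hT1cols : LinearIndependent k (fun j : Fin 12 => fun i => T₁ i j))
    (hmul : T₁ * T₂ = 0)
    (hT2cols : LinearIndependent k (fun j : Fin m => fun i => T₂ i j)) :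
    m ≤ 6 := by
  simpa using Matrix.card_le_card_of_mul_eq_zero_of_isHomogeneous_one h1 h2 hT1cols hT2cols hmul
end

section
/- The module M = coker of the 3×6 matrix [[x,y,z,0,0,0],[0,0,x,y,z,0],[x+y,0,0,x,y,z]] over S = k[x,y,z] has Betti diagram 3·D₁, where D₁ is the diagram with β₀,₀ = 1, β₁,₁ = 2, β₂,₃ = 2, β₃,₄ = 1; that is, β(M) has β₀,₀ = 3, β₁,₁ = 6, β₂,₃ = 6, β₃,₄ = 3 and all other Betti numbers zero. -/
/-!
The resolution is explicit: one exhibits a matrix `d₂` of quadrics and a matrix `d₃` of linear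
forms, and `d₁ * d₂ = 0`, `d₂ * d₃ = 0` are direct computations. Exactness is checked by hand,
using only that `X i` is a nonzerodivisor and that `X i ∣ X j * p` forces `X i ∣ p` for `j ≠ i`
(set `X i = 0`). A vector killed by the first two rows of `d₁` is described by iterating the
Koszul syzygies of `x, y, z`; modulo `z` the last row then becomes an equation in `x, y` alone,
which is solved directly, and the solution lifts. The kernels of `d₂` and `d₃` are computed the
same way.
-/

open MvPolynomial Matrix

namespace MvPolynomial

variable {σ R : Type*} [CommRing R] [DecidableEq σ] {i j l : σ} {p : MvPolynomial σ R}

noncomputable def substZero (i : σ) : MvPolynomial σ R →ₐ[R] MvPolynomial σ R :=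
  aeval (Function.update X i 0)

@[simp]
theorem substZero_X_self (i : σ) : substZero i (X i : MvPolynomial σ R) = 0 := by
  simp [substZero]

@[simp]
theorem substZero_X_of_ne (h : j ≠ i) : substZero i (X j : MvPolynomial σ R) = X j := by
  simp [substZero, Function.update_of_ne h]

theorem X_dvd_sub_substZero (i : σ) (p : MvPolynomial σ R) : X i ∣ p - substZero i p := by
  induction p using MvPolynomial.induction_on with
  | C a => simp [substZero]
  | add p q hp hq => simpa [add_sub_add_comm] using dvd_add hp hq
  | mul_X p j hp =>
    rcases eq_or_ne j i with rfl | h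
    · simp
    · simpa [h, sub_mul] using hp.mul_right (X j)

theorem exists_eq_substZero_add_X_mul (i : σ) (p : MvPolynomial σ R) :
    ∃ q, p = substZero i p + X i * q := by
  obtain ⟨q, hq⟩ := X_dvd_sub_substZero i p
  exact ⟨q, by linear_combination hq⟩

theorem X_dvd_iff_substZero_eq_zero : X i ∣ p ↔ substZero i p = 0 := by
  refine ⟨?_, fun h => by simpa [h] using X_dvd_sub_substZero i p⟩
  rintro ⟨q, rfl⟩
  simp

theorem X_dvd_of_X_dvd_X_mul (h : j ≠ i) (hd : X i ∣ X j * p) : X i ∣ p := by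
  rw [X_dvd_iff_substZero_eq_zero] at hd ⊢
  simpa [h] using hd

theorem X_mul_add_X_mul_add_X_mul_eq_zero_iff (hij : i ≠ j) (hil : i ≠ l) (hjl : j ≠ l)
    {a b c : MvPolynomial σ R} :
    X i * a + X j * b + X l * c = 0 ↔
      ∃ p q r, a = X j * p + X l * q ∧ b = -(X i * p) + X l * r ∧
        c = -(X i * q) - X j * r := by
  refine ⟨fun h => ?_, fun ⟨p, q, r, ha, hb, hc⟩ => by rw [ha, hb, hc]; ring⟩
  obtain ⟨q, ha⟩ := exists_eq_substZero_add_X_mul l a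
  obtain ⟨r, hb⟩ := exists_eq_substZero_add_X_mul l b
  have h' : X i * substZero l a + X j * substZero l b = 0 := by
    simpa [hil, hjl] using congrArg (substZero l) h
  obtain ⟨p, hp⟩ : X j ∣ substZero l a :=
    X_dvd_of_X_dvd_X_mul hij ⟨-substZero l b, by linear_combination h'⟩
  have hb' : substZero l b = -(X i * p) := by
    rw [← X_mul_cancel_left_iff (i := j)]
    linear_combination h' - X i * hp
  have hc : c = -(X i * q) - X j * r := by
    rw [← X_mul_cancel_left_iff (i := l)]
    linear_combination h - X i * ha - X j * hb - h'
  exact ⟨p, q, r, by rw [ha, hp], by rw [hb, hb'], hc⟩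

end MvPolynomial

theorem Matrix.exact_toLin'_of_mul_eq_zero {R l m n : Type*} [CommSemiring R] [Fintype m]
    [Fintype n] [DecidableEq m] [DecidableEq n] {M : Matrix m n R} {N : Matrix l m R}
    (hNM : N * M = 0) (h : ∀ v, N *ᵥ v = 0 → ∃ u, M *ᵥ u = v) :
    Function.Exact (toLin' M) (toLin' N) := by
  intro v
  refine ⟨fun hv => ?_, ?_⟩
  · obtain ⟨u, rfl⟩ := h v (by simpa using hv)
    exact ⟨u, by simp⟩
  · rintro ⟨u, rfl⟩
    simp [mulVec_mulVec, hNM]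

namespace ExplicitResolution

variable {R : Type*} [CommRing R]

noncomputable def d₁ : Matrix (Fin 3) (Fin 6) (MvPolynomial (Fin 3) R) :=
  !![X 0, X 1, X 2, 0, 0, 0;
     0, 0, X 0, X 1, X 2, 0;
     X 0 + X 1, 0, 0, X 0, X 1, X 2]

noncomputable def d₂ : Matrix (Fin 6) (Fin 6) (MvPolynomial (Fin 3) R) :=
  !![-(X 0 * X 1), X 1 * X 1, X 1 * X 2, 0, 0, X 2 * X 2;
     X 0 * X 0 + X 1 * X 2, -(X 0 * X 1), -(X 0 * X 2), X 2 * X 2, 0, -(X 1 * X 2);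
     -(X 1 * X 1), 0, 0, -(X 1 * X 2), 0, X 1 * X 1 - X 0 * X 2;
     X 0 * X 1 - X 0 * X 2, X 0 * X 2 + X 1 * X 2, 0, X 0 * X 2, X 2 * X 2, -(X 0 * X 1);
     X 0 * X 1, -(X 1 * X 1) - X 0 * X 1, 0, 0, -(X 1 * X 2), X 0 * X 0;
     X 0 * X 0, -(X 0 * X 1) - X 0 * X 0, -(X 1 * X 1) - X 0 * X 1, -(X 0 * X 0),
       X 1 * X 1 - X 0 * X 2, -(X 1 * X 2) - X 0 * X 2]

noncomputable def d₃ : Matrix (Fin 6) (Fin 3) (MvPolynomial (Fin 3) R) :=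
  !![-(X 2), X 1, 0;
     0, X 0, -(X 2);
     -(X 0), -(X 2), X 1;
     X 1, -(X 0), 0;
     -(X 0), 0, X 0 + X 1;
     0, X 1, 0]

theorem d₂_isHomogeneous (i j : Fin 6) : (d₂ (R := R) i j).IsHomogeneous 2 := by
  have hXX (i j : Fin 3) : (X i * X j : MvPolynomial (Fin 3) R).IsHomogeneous 2 :=
    (isHomogeneous_X R i).mul (isHomogeneous_X R j)
  -- `with_reducible` keeps the unifier from unfolding polynomial arithmetic.
  fin_cases i <;> fin_cases j <;> simp [d₂] <;>
    repeat' first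
      | with_reducible exact hXX _ _
      | with_reducible exact isHomogeneous_zero _ _ _
      | with_reducible refine IsHomogeneous.sub ?_ ?_
      | with_reducible refine IsHomogeneous.add ?_ ?_
      | with_reducible refine IsHomogeneous.neg ?_

theorem d₃_isHomogeneous (i : Fin 6) (j : Fin 3) : (d₃ (R := R) i j).IsHomogeneous 1 := by
  fin_cases i <;> fin_cases j <;> simp [d₃] <;>
    repeat' first
      | exact isHomogeneous_X _ _
      | exact isHomogeneous_zero _ _ _
      | refine IsHomogeneous.add ?_ ?_
      | refine IsHomogeneous.neg ?_

theorem d₁_mul_d₂ : d₁ (R := R) * d₂ (R := R) = 0 := by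
  refine Matrix.ext fun i j => ?_
  fin_cases i <;> fin_cases j <;> simp [d₁, d₂, mul_apply, Fin.sum_univ_succ] <;> ring

theorem d₂_mul_d₃ : d₂ (R := R) * d₃ (R := R) = 0 := by
  refine Matrix.ext fun i j => ?_
  fin_cases i <;> fin_cases j <;> simp [d₂, d₃, mul_apply, Fin.sum_univ_succ] <;> ring

section mulVec

variable (v₀ v₁ v₂ v₃ v₄ v₅ : MvPolynomial (Fin 3) R)

theorem d₁_mulVec :
    d₁ *ᵥ ![v₀, v₁, v₂, v₃, v₄, v₅] =
      ![X 0 * v₀ + X 1 * v₁ + X 2 * v₂, X 0 * v₂ + X 1 * v₃ + X 2 * v₄,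
        (X 0 + X 1) * v₀ + X 0 * v₃ + X 1 * v₄ + X 2 * v₅] := by
  funext i
  fin_cases i <;> simp [d₁, mulVec, dotProduct, Fin.sum_univ_succ] <;> ring

theorem d₂_mulVec :
    d₂ *ᵥ ![v₀, v₁, v₂, v₃, v₄, v₅] =
      ![-(X 0 * X 1 * v₀) + X 1 * X 1 * v₁ + X 1 * X 2 * v₂ + X 2 * X 2 * v₅,
        (X 0 * X 0 + X 1 * X 2) * v₀ - X 0 * X 1 * v₁ - X 0 * X 2 * v₂ + X 2 * X 2 * v₃
          - X 1 * X 2 * v₅,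
        -(X 1 * X 1 * v₀) - X 1 * X 2 * v₃ + (X 1 * X 1 - X 0 * X 2) * v₅,
        (X 0 * X 1 - X 0 * X 2) * v₀ + (X 0 * X 2 + X 1 * X 2) * v₁ + X 0 * X 2 * v₃
          + X 2 * X 2 * v₄ - X 0 * X 1 * v₅,
        X 0 * X 1 * v₀ - (X 1 * X 1 + X 0 * X 1) * v₁ - X 1 * X 2 * v₄ + X 0 * X 0 * v₅,
        X 0 * X 0 * v₀ - (X 0 * X 1 + X 0 * X 0) * v₁ - (X 1 * X 1 + X 0 * X 1) * v₂
          - X 0 * X 0 * v₃ + (X 1 * X 1 - X 0 * X 2) * v₄ - (X 1 * X 2 + X 0 * X 2) * v₅] := by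
  funext i
  fin_cases i <;> simp [d₂, mulVec, dotProduct, Fin.sum_univ_succ] <;> ring

theorem d₃_mulVec :
    d₃ *ᵥ ![v₀, v₁, v₂] =
      ![X 1 * v₁ - X 2 * v₀, X 0 * v₁ - X 2 * v₂, X 1 * v₂ - X 0 * v₀ - X 2 * v₁,
        X 1 * v₀ - X 0 * v₁, (X 0 + X 1) * v₂ - X 0 * v₀, X 1 * v₁] := by
  funext i
  fin_cases i <;> simp [d₃, mulVec, dotProduct, Fin.sum_univ_succ] <;> ring

end mulVec

theorem d₃_injective : Function.Injective (toLin' (d₃ (R := R))) := by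
  rw [injective_iff_map_eq_zero]
  intro t ht
  obtain ⟨t₀, t₁, t₂, rfl⟩ : ∃ t₀ t₁ t₂, t = ![t₀, t₁, t₂] :=
    ⟨_, _, _, (FinVec.etaExpand_eq t).symm⟩
  simp only [toLin'_apply, d₃_mulVec, cons_eq_zero_iff] at ht
  obtain ⟨h₀, h₁, -, -, -, ht₁, -⟩ := ht
  rw [isRegular_X.left.mul_left_eq_zero_iff] at ht₁
  simp only [ht₁, mul_zero, zero_sub, neg_eq_zero, isRegular_X.left.mul_left_eq_zero_iff] at h₀ h₁
  simp [h₀, ht₁, h₁]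

theorem exists_d₃_mulVec_eq_of_d₂_mulVec_eq_zero {w : Fin 6 → MvPolynomial (Fin 3) R}
    (hw : d₂ *ᵥ w = 0) : ∃ t, d₃ *ᵥ t = w := by
  obtain ⟨w₀, w₁, w₂, w₃, w₄, w₅, rfl⟩ : ∃ w₀ w₁ w₂ w₃ w₄ w₅, w = ![w₀, w₁, w₂, w₃, w₄, w₅] :=
    ⟨_, _, _, _, _, _, (FinVec.etaExpand_eq w).symm⟩
  simp only [d₂_mulVec, cons_eq_zero_iff] at hw
  obtain ⟨h₀, -, h₂, -, h₄, -⟩ := hw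
  obtain ⟨m, hm⟩ : X 2 ∣ w₅ - w₀ :=
    X_dvd_of_X_dvd_X_mul (j := 1) (by decide) <| X_dvd_of_X_dvd_X_mul (j := 1) (by decide)
      ⟨X 0 * w₅ + X 1 * w₃, by linear_combination h₂⟩
  obtain ⟨n, hn⟩ : X 1 ∣ w₅ := X_dvd_of_X_dvd_X_mul (j := 0) (by decide)
    ⟨X 1 * m - w₃, by
      rw [← X_mul_cancel_left_iff (i := 2)]
      linear_combination -h₂ + X 1 * X 1 * hm⟩
  have hw₀ : w₀ = X 1 * n - X 2 * m := by linear_combination hn - hm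
  have hw₃ : w₃ = X 1 * m - X 0 * n := by
    rw [← X_mul_cancel_left_iff (i := 1), ← X_mul_cancel_left_iff (i := 2)]
    linear_combination -h₂ + X 1 * X 1 * hm - X 0 * X 2 * hn
  obtain ⟨g, hg⟩ : X 1 ∣ w₂ + X 0 * m + X 2 * n := X_dvd_of_X_dvd_X_mul (j := 2) (by decide)
    ⟨X 0 * n - w₁, by
      rw [← X_mul_cancel_left_iff (i := 1)]
      linear_combination h₀ + X 0 * X 1 * hw₀ - X 2 * X 2 * hn⟩
  have hw₁ : w₁ = X 0 * n - X 2 * g := by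
    rw [← X_mul_cancel_left_iff (i := 1), ← X_mul_cancel_left_iff (i := 1)]
    linear_combination h₀ + X 0 * X 1 * hw₀ - X 2 * X 2 * hn - X 1 * X 2 * hg
  have hw₄ : w₄ = (X 0 + X 1) * g - X 0 * m := by
    rw [← X_mul_cancel_left_iff (i := 1), ← X_mul_cancel_left_iff (i := 2)]
    linear_combination -h₄ + X 0 * X 1 * hw₀ - (X 1 * X 1 + X 0 * X 1) * hw₁ + X 0 * X 0 * hn
  refine ⟨![m, n, g], ?_⟩
  simp only [d₃_mulVec, vecCons_inj, and_true]
  exact ⟨by linear_combination -hw₀, by linear_combination -hw₁, by linear_combination -hg,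
    by linear_combination -hw₃, by linear_combination -hw₄, by linear_combination -hn⟩

theorem exists_of_first_two_rows_eq_zero {v₀ v₁ v₂ v₃ v₄ : MvPolynomial (Fin 3) R}
    (h₀ : X 0 * v₀ + X 1 * v₁ + X 2 * v₂ = 0) (h₁ : X 0 * v₂ + X 1 * v₃ + X 2 * v₄ = 0) :
    ∃ a c s t u r, v₀ = X 1 * a + X 2 * (X 1 * s + X 2 * t) ∧ v₁ = -(X 0 * a) + X 2 * c ∧
      v₂ = -(X 0 * (X 1 * s + X 2 * t)) - X 1 * c ∧
      v₃ = X 0 * c + X 0 * X 0 * s - X 0 * X 2 * u + X 2 * r ∧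
      v₄ = X 0 * X 0 * t + X 0 * X 1 * u - X 1 * r := by
  have koszul (a b c : MvPolynomial (Fin 3) R) :=
    X_mul_add_X_mul_add_X_mul_eq_zero_iff (a := a) (b := b) (c := c) (i := 0) (j := 1) (l := 2)
      (by decide) (by decide) (by decide)
  obtain ⟨a, b, c, hv₀, hv₁, hv₂⟩ := (koszul _ _ _).mp h₀
  obtain ⟨p, q, r, hb, hv₃, hv₄⟩ :=
    (koszul (-(X 0 * b)) (v₃ - X 0 * c) v₄).mp (by linear_combination h₁ - X 0 * hv₂)
  obtain ⟨s, t, u, hb, hp, hq⟩ := (koszul b p q).mp (by linear_combination -hb)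
  refine ⟨a, c, s, t, u, r, by rw [hv₀, hb], hv₁, by rw [hv₂, hb], ?_, ?_⟩
  · linear_combination hv₃ - X 0 * hp
  · linear_combination hv₄ - X 0 * hq

/- On vectors parametrized as in `exists_of_first_two_rows_eq_zero`, the last row of `d₁` is
congruent modulo `z` to the left-hand side below, with `c + x s + y t` in place of `c`. -/
theorem exists_of_reduced_last_row_eq_zero {a c u r : MvPolynomial (Fin 3) R}
    (h : X 0 * X 0 * c + X 1 * ((X 0 + X 1) * a + X 0 * X 1 * u - X 1 * r) = 0) :
    ∃ g d, a = -(X 0 * g) + X 1 * d ∧ c = X 1 * g ∧ r = X 0 * (d - g) + X 1 * d + X 0 * u := by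
  obtain ⟨g, hg⟩ : X 1 ∣ c :=
    X_dvd_of_X_dvd_X_mul (j := 0) (by decide) <| X_dvd_of_X_dvd_X_mul (j := 0) (by decide)
      ⟨-((X 0 + X 1) * a + X 0 * X 1 * u - X 1 * r), by linear_combination h⟩
  have h' : (X 0 + X 1) * a + X 0 * X 1 * u - X 1 * r = -(X 0 * X 0 * g) := by
    rw [← X_mul_cancel_left_iff (i := 1)]
    linear_combination h - X 0 * X 0 * hg
  obtain ⟨d, hd⟩ : X 1 ∣ a + X 0 * g :=
    X_dvd_of_X_dvd_X_mul (j := 0) (by decide) ⟨r - a - X 0 * u, by linear_combination h'⟩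
  refine ⟨g, d, by linear_combination hd, hg, ?_⟩
  rw [← X_mul_cancel_left_iff (i := 1)]
  linear_combination -h' + (X 0 + X 1) * hd

theorem exists_of_X_two_dvd_reduced_last_row {a c u r : MvPolynomial (Fin 3) R}
    (h : X 2 ∣ X 0 * X 0 * c + X 1 * ((X 0 + X 1) * a + X 0 * X 1 * u - X 1 * r)) :
    ∃ g d a' c' r', a = -(X 0 * g) + X 1 * d + X 2 * a' ∧ c = X 1 * g + X 2 * c' ∧
      r = X 0 * (d - g) + X 1 * d + X 0 * u + X 2 * r' := by
  rw [X_dvd_iff_substZero_eq_zero] at h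
  obtain ⟨g, d, ha, hc, hr⟩ := exists_of_reduced_last_row_eq_zero (by simpa using h)
  obtain ⟨a', ha'⟩ := exists_eq_substZero_add_X_mul 2 a
  obtain ⟨c', hc'⟩ := exists_eq_substZero_add_X_mul 2 c
  obtain ⟨u', hu'⟩ := exists_eq_substZero_add_X_mul 2 u
  obtain ⟨r', hr'⟩ := exists_eq_substZero_add_X_mul 2 r
  exact ⟨g, d, a', c', r' - X 0 * u', by linear_combination ha' + ha,
    by linear_combination hc' + hc, by linear_combination hr' + hr - X 0 * hu'⟩

theorem exists_d₂_mulVec_eq_of_d₁_mulVec_eq_zero {v : Fin 6 → MvPolynomial (Fin 3) R}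
    (hv : d₁ *ᵥ v = 0) : ∃ w, d₂ *ᵥ w = v := by
  obtain ⟨v₀, v₁, v₂, v₃, v₄, v₅, rfl⟩ : ∃ v₀ v₁ v₂ v₃ v₄ v₅, v = ![v₀, v₁, v₂, v₃, v₄, v₅] :=
    ⟨_, _, _, _, _, _, (FinVec.etaExpand_eq v).symm⟩
  simp only [d₁_mulVec, cons_eq_zero_iff] at hv
  obtain ⟨h₀, h₁, h₂, -⟩ := hv
  obtain ⟨a, c, s, t, u, r, hv₀, hv₁, hv₂, hv₃, hv₄⟩ := exists_of_first_two_rows_eq_zero h₀ h₁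
  obtain ⟨g, d, a', c', r', ha, hc, hr⟩ :=
    exists_of_X_two_dvd_reduced_last_row (a := a) (c := c + X 0 * s + X 1 * t) (u := u) (r := r)
      ⟨-(v₅ + (X 0 + X 1) * (X 1 * s + X 2 * t) - X 0 * X 0 * u + X 0 * r), by
        linear_combination h₂ - (X 0 + X 1) * hv₀ - X 0 * hv₃ - X 1 * hv₄⟩
  refine ⟨![g, d, a' + s, c', r', t], ?_⟩
  simp only [d₂_mulVec, vecCons_inj, and_true]
  refine ⟨by linear_combination -hv₀ - X 1 * ha, by linear_combination -hv₁ + X 0 * ha - X 2 * hc,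
    by linear_combination -hv₂ + X 1 * hc, by linear_combination -hv₃ - X 2 * hr - X 0 * hc,
    by linear_combination -hv₄ + X 1 * hr, ?_⟩
  rw [← X_mul_cancel_left_iff (i := 2)]
  linear_combination -h₂ + (X 0 + X 1) * hv₀ + X 0 * hv₃ + X 1 * hv₄ + (X 0 + X 1) * X 1 * ha
    + X 0 * X 0 * hc + (X 0 * X 2 - X 1 * X 1) * hr

end ExplicitResolution

/-- The module `M = coker [[x,y,z,0,0,0],[0,0,x,y,z,0],[x+y,0,0,x,y,z]]` over
`S = k[x,y,z]` has Betti diagram `3·D₁` where `D₁ = π₍₀,₁,₃,₄₎`: its minimal graded free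
resolution has the form `0 → S(-4)³ → S(-3)⁶ → S(-1)⁶ → S³ → M → 0`.  This is expressed
by the existence of a matrix `B` of quadrics and a matrix `C` of linear forms making the
corresponding complex exact (minimality is automatic since all entries have positive
degree). -/
theorem betti_diagram_of_explicit_cokernel (k : Type*) [Field k] :
    ∃ (B : Matrix (Fin 6) (Fin 6) (MvPolynomial (Fin 3) k))
      (C : Matrix (Fin 6) (Fin 3) (MvPolynomial (Fin 3) k)),
      (∀ i j, (B i j).IsHomogeneous 2) ∧
      (∀ i j, (C i j).IsHomogeneous 1) ∧
      Function.Injective (Matrix.toLin' C) ∧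
      Function.Exact (Matrix.toLin' C) (Matrix.toLin' B) ∧
      Function.Exact (Matrix.toLin' B) (Matrix.toLin'
        (!![X 0, X 1, X 2, 0, 0, 0;
            0, 0, X 0, X 1, X 2, 0;
            X 0 + X 1, 0, 0, X 0, X 1, X 2] :
          Matrix (Fin 3) (Fin 6) (MvPolynomial (Fin 3) k))) := by
  open ExplicitResolution in
  exact ⟨d₂, d₃, d₂_isHomogeneous, d₃_isHomogeneous, d₃_injective,
    exact_toLin'_of_mul_eq_zero d₂_mul_d₃ fun _ => exists_d₃_mulVec_eq_of_d₂_mulVec_eq_zero,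
    exact_toLin'_of_mul_eq_zero d₁_mul_d₂ fun _ => exists_d₂_mulVec_eq_of_d₁_mulVec_eq_zero⟩
end

section
/- The pure diagram π_{(0,1,3,4)} = (β₀,₀, β₁,₁, β₂,₃, β₃,₄) = (1, 2, 2, 1) is not the Betti diagram of any graded module over k[x₁,...,xₙ]: there is no module M with β₀,₀(M) = 1, β₁,₁(M) = 2, β₂,₃(M) = 2, β₃,₄(M) = 1, and all other β_{i,j}(M) = 0. -/
/-!
The two linear forms `ℓ₁, ℓ₂` presenting the module satisfy the Koszul relation
`ℓ₁ ℓ₂ - ℓ₂ ℓ₁ = 0`, so `(ℓ₂, -ℓ₁)` is a syzygy with linear entries and, by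
exactness, lies in the image of the matrix `B` of quadrics. Every vector in that image has
vanishing components in degree `< 2`, so the syzygy is zero; hence `ℓ₁ = 0`, contradicting
the minimality (linear independence) of the presentation.
-/

open MvPolynomial Matrix

attribute [local instance] MvPolynomial.gradedAlgebra

section Homogeneous

variable {σ R : Type*} [CommSemiring R]

theorem MvPolynomial.homogeneousComponent_mul_eq_zero_of_lt {p q : MvPolynomial σ R}
    {m j : ℕ} (hp : p.IsHomogeneous m) (hj : j < m) :
    homogeneousComponent j (p * q) = 0 := by
  rw [← decomposition.decompose'_apply]
  exact DirectSum.coe_decompose_mul_of_left_mem_of_not_le (homogeneousSubmodule σ R) hp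
    (not_le.mpr hj)

theorem Matrix.eq_zero_of_mulVec_eq_of_isHomogeneous_of_lt {ι ι' : Type*} [Fintype ι']
    {B : Matrix ι ι' (MvPolynomial σ R)} {m j : ℕ} (hB : ∀ i l, (B i l).IsHomogeneous m)
    {v : ι → MvPolynomial σ R} (hv : ∀ i, (v i).IsHomogeneous j) (hj : j < m)
    {w : ι' → MvPolynomial σ R} (hw : B *ᵥ w = v) : v = 0 := by
  funext i
  rw [← homogeneousComponent_eq_self (hv i), ← hw]
  simp only [mulVec, dotProduct, map_sum]
  exact Finset.sum_eq_zero fun l _ => homogeneousComponent_mul_eq_zero_of_lt (hB i l) hj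

end Homogeneous

theorem Matrix.mulVec_koszul {R : Type*} [CommRing R] (A : Matrix (Fin 1) (Fin 2) R) :
    A *ᵥ ![A 0 1, -A 0 0] = 0 := by
  funext i
  fin_cases i
  simp [mulVec, dotProduct, Fin.sum_univ_two, mul_comm]

/-- The pure diagram `π₍₀,₁,₃,₄₎ = (β₀₀, β₁₁, β₂₃, β₃₄) = (1, 2, 2, 1)` is not the Betti
diagram of any graded module over `k[x₁,…,xₙ]`: there is no minimal graded free resolution
`0 → S(-4) → S(-3)² → S(-1)² → S` with the prescribed shape.  Here `A` is the `1 × 2`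
presentation matrix of linear forms (linearly independent over `k`, by minimality), `B` is
a `2 × 2` matrix of quadrics and `C` a `2 × 1` matrix of linear forms, and exactness of
the resulting complex is required. -/
theorem pure_diagram_0134_not_betti (k : Type*) [Field k] (n : ℕ) :
    ¬ ∃ (A : Matrix (Fin 1) (Fin 2) (MvPolynomial (Fin n) k))
        (B : Matrix (Fin 2) (Fin 2) (MvPolynomial (Fin n) k))
        (C : Matrix (Fin 2) (Fin 1) (MvPolynomial (Fin n) k)),
      (∀ i j, (A i j).IsHomogeneous 1) ∧
      (∀ i j, (B i j).IsHomogeneous 2) ∧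
      (∀ i j, (C i j).IsHomogeneous 1) ∧
      LinearIndependent k (fun j : Fin 2 => fun i => A i j) ∧
      Function.Injective (Matrix.toLin' C) ∧
      Function.Exact (Matrix.toLin' C) (Matrix.toLin' B) ∧
      Function.Exact (Matrix.toLin' B) (Matrix.toLin' A) := by
  rintro ⟨A, B, -, hA, hB, -, hind, -, -, hexBA⟩
  obtain ⟨w, hw⟩ := (hexBA _).mp A.mulVec_koszul
  have hsyz : ∀ j, (![A 0 1, -A 0 0] j).IsHomogeneous 1 :=
    Fin.forall_fin_two.mpr ⟨hA 0 1, (hA 0 0).neg⟩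
  have hzero := B.eq_zero_of_mulVec_eq_of_isHomogeneous_of_lt hB hsyz one_lt_two hw
  have hA00 : A 0 0 = 0 := by simpa using congr_fun hzero 1
  exact hind.ne_zero 0 (funext fun i => by fin_cases i; simpa using hA00)
end
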